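/- For n ≥ 3, the sum over i from 2 to n−1 of (C_{n−i+1} − C_{n−i}) * C_{i−1} equals (5/(n+2)) * C(2n-2, n+1), where C_m is the m-th Catalan number. -/
import Mathlib

lemma catalan_conv (k : ℕ) :
    catalan (k + 1) = ∑ i ∈ Finset.range (k + 1), catalan i * catalan (k - i) := by
  rw [catalan_succ, ← Fin.sum_univ_eq_sum_range]

lemma sumA (m : ℕ) :
    catalan (m + 4) = (∑ j ∈ Finset.range (m + 1), catalan (j + 1) * catalan (m + 2 - j))
      + catalan (m + 3) + catalan (m + 3) + catalan (m + 2) := by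
  have h := catalan_conv (m + 3)
  rw [show m + 3 + 1 = (m + 2) + 1 + 1 from rfl, Finset.sum_range_succ, Finset.sum_range_succ,
    Finset.sum_range_succ'] at h
  simp only [Nat.succ_sub_succ, Nat.sub_self, Nat.sub_zero, Nat.add_sub_cancel,
    Nat.add_sub_cancel_left, catalan_zero, catalan_one, mul_one, one_mul] at h
  linarith [h]

lemma sumB (m : ℕ) :
    catalan (m + 3) = (∑ j ∈ Finset.range (m + 1), catalan (j + 1) * catalan (m + 1 - j))
      + catalan (m + 2) + catalan (m + 2) := by
  have h := catalan_conv (m + 2)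
  rw [show m + 2 + 1 = (m + 1) + 1 + 1 from rfl, Finset.sum_range_succ,
    Finset.sum_range_succ'] at h
  simp only [Nat.succ_sub_succ, Nat.sub_self, Nat.sub_zero, Nat.add_sub_cancel,
    Nat.add_sub_cancel_left, catalan_zero, catalan_one, mul_one, one_mul] at h
  linarith [h]

/-- For `n ≥ 3`, `∑_{i=2}^{n-1} (C_{n-i+1} - C_{n-i}) * C_{i-1}
= (5/(n+2)) * C(2n-2, n+1)`. -/
theorem catalan_diff_sum_eq' (n : ℕ) (hn : 3 ≤ n) :
    (∑ i ∈ Finset.Icc 2 (n - 1),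
        ((catalan (n - i + 1) : ℚ) - catalan (n - i)) * (catalan (i - 1) : ℚ))
      = (5 / (n + 2 : ℚ)) * (Nat.choose (2 * n - 2) (n + 1)) := by
  obtain ⟨m, rfl⟩ : ∃ m, n = m + 3 := ⟨n - 3, by omega⟩
  -- reindex the sum
  have hre : (∑ i ∈ Finset.Icc 2 (m + 3 - 1),
        ((catalan (m + 3 - i + 1) : ℚ) - catalan (m + 3 - i)) * (catalan (i - 1) : ℚ))
      = ∑ j ∈ Finset.range (m + 1),
        ((catalan (m + 2 - j) : ℚ) - catalan (m + 1 - j)) * (catalan (j + 1) : ℚ) := by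
    rw [show m + 3 - 1 = m + 2 from rfl, show Finset.Icc 2 (m + 2) = Finset.Ico 2 (m + 3) from rfl,
      Finset.sum_Ico_eq_sum_range]
    apply Finset.sum_congr rfl
    intro j hj
    simp only [Finset.mem_range] at hj
    have e1 : m + 3 - (2 + j) + 1 = m + 2 - j := by omega
    have e2 : m + 3 - (2 + j) = m + 1 - j := by omega
    have e3 : 2 + j - 1 = j + 1 := by omega
    rw [e1, e2, e3]
  rw [hre]
  have hA := sumA m
  have hB := sumB m
  have hA' : (∑ j ∈ Finset.range (m + 1), ((catalan (j + 1) : ℚ) * catalan (m + 2 - j)))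
      = (catalan (m + 4) : ℚ) - 2 * catalan (m + 3) - catalan (m + 2) := by
    have := congrArg (fun x : ℕ => (x : ℚ)) hA
    push_cast at this
    linarith
  have hB' : (∑ j ∈ Finset.range (m + 1), ((catalan (j + 1) : ℚ) * catalan (m + 1 - j)))
      = (catalan (m + 3) : ℚ) - 2 * catalan (m + 2) := by
    have := congrArg (fun x : ℕ => (x : ℚ)) hB
    push_cast at this
    linarith
  have hsum : (∑ j ∈ Finset.range (m + 1),
        ((catalan (m + 2 - j) : ℚ) - catalan (m + 1 - j)) * (catalan (j + 1) : ℚ))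
      = (catalan (m + 4) : ℚ) - 3 * catalan (m + 3) + catalan (m + 2) := by
    have : (∑ j ∈ Finset.range (m + 1),
        ((catalan (m + 2 - j) : ℚ) - catalan (m + 1 - j)) * (catalan (j + 1) : ℚ))
        = (∑ j ∈ Finset.range (m + 1), ((catalan (j + 1) : ℚ) * catalan (m + 2 - j)))
          - (∑ j ∈ Finset.range (m + 1), ((catalan (j + 1) : ℚ) * catalan (m + 1 - j))) := by
      rw [← Finset.sum_sub_distrib]
      apply Finset.sum_congr rfl
      intro j _
      ring
    rw [this, hA', hB']
    ring
  rw [hsum]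
  -- now the arithmetic identity
  have e4 : 2 * (m + 3) - 2 = 2 * m + 4 := by omega
  have e5 : m + 3 + 1 = m + 4 := rfl
  rw [e4, e5]
  set B : ℚ := (Nat.centralBinom (m + 2) : ℚ) with hBdef
  have h2 : ((m : ℚ) + 3) * catalan (m + 2) = B := by
    have := succ_mul_catalan_eq_centralBinom (m + 2)
    rw [hBdef]
    exact_mod_cast congrArg (fun x : ℕ => (x : ℚ)) this
  have hc3 : ((m : ℚ) + 4) * catalan (m + 3) = (Nat.centralBinom (m + 3) : ℚ) := by
    have := succ_mul_catalan_eq_centralBinom (m + 3)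
    exact_mod_cast congrArg (fun x : ℕ => (x : ℚ)) this
  have hc4 : ((m : ℚ) + 5) * catalan (m + 4) = (Nat.centralBinom (m + 4) : ℚ) := by
    have := succ_mul_catalan_eq_centralBinom (m + 4)
    exact_mod_cast congrArg (fun x : ℕ => (x : ℚ)) this
  have hb3 : ((m : ℚ) + 3) * (Nat.centralBinom (m + 3) : ℚ) = 2 * (2 * m + 5) * B := by
    have := Nat.succ_mul_centralBinom_succ (m + 2)
    have := congrArg (fun x : ℕ => (x : ℚ)) this
    push_cast at this
    rw [hBdef]
    linarith
  have hb4 : ((m : ℚ) + 4) * (Nat.centralBinom (m + 4) : ℚ)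
      = 2 * (2 * m + 7) * (Nat.centralBinom (m + 3) : ℚ) := by
    have := Nat.succ_mul_centralBinom_succ (m + 3)
    have := congrArg (fun x : ℕ => (x : ℚ)) this
    push_cast at this
    linarith
  have hch1 : ((Nat.choose (2 * m + 4) (m + 3) : ℚ)) * (m + 3)
      = B * (m + 2) := by
    have := Nat.choose_succ_right_eq (2 * m + 4) (m + 2)
    have := congrArg (fun x : ℕ => (x : ℚ)) this
    have e : 2 * m + 4 - (m + 2) = m + 2 := by omega
    rw [e] at this
    push_cast at this
    rw [hBdef, Nat.centralBinom_eq_two_mul_choose, show 2 * (m + 2) = 2 * m + 4 from by ring]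
    linarith
  have hch2 : ((Nat.choose (2 * m + 4) (m + 4) : ℚ)) * (m + 4)
      = (Nat.choose (2 * m + 4) (m + 3) : ℚ) * (m + 1) := by
    have := Nat.choose_succ_right_eq (2 * m + 4) (m + 3)
    have := congrArg (fun x : ℕ => (x : ℚ)) this
    have e : 2 * m + 4 - (m + 3) = m + 1 := by omega
    rw [e] at this
    push_cast at this
    linarith
  have k1 : ((m : ℚ) + 5) * ((m : ℚ) + 4) * ((m : ℚ) + 3) * catalan (m + 4)
      = 4 * (2 * m + 7) * (2 * m + 5) * B := by
    linear_combination ((m : ℚ) + 4) * ((m : ℚ) + 3) * hc4 + ((m : ℚ) + 3) * hb4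
      + 2 * (2 * (m : ℚ) + 7) * hb3
  have k2 : ((m : ℚ) + 4) * ((m : ℚ) + 3) * catalan (m + 3) = 2 * (2 * m + 5) * B := by
    linear_combination ((m : ℚ) + 3) * hc3 + hb3
  have k3 : ((m : ℚ) + 4) * ((m : ℚ) + 3) * (Nat.choose (2 * m + 4) (m + 4) : ℚ)
      = (m + 1) * (m + 2) * B := by
    linear_combination ((m : ℚ) + 3) * hch2 + ((m : ℚ) + 1) * hch1
  have key : ((catalan (m + 4) : ℚ) - 3 * catalan (m + 3) + catalan (m + 2))
        * (((m : ℚ) + 5) * ((m : ℚ) + 4) * ((m : ℚ) + 3))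
      = 5 * (Nat.choose (2 * m + 4) (m + 4) : ℚ) * (((m : ℚ) + 4) * ((m : ℚ) + 3)) := by
    linear_combination k1 - 3 * ((m : ℚ) + 5) * k2 + ((m : ℚ) + 5) * ((m : ℚ) + 4) * h2
      - 5 * k3
  have h43 : ((m : ℚ) + 4) * ((m : ℚ) + 3) ≠ 0 := by positivity
  have key2 : ((catalan (m + 4) : ℚ) - 3 * catalan (m + 3) + catalan (m + 2)) * ((m : ℚ) + 5)
      = 5 * (Nat.choose (2 * m + 4) (m + 4) : ℚ) :=
    mul_right_cancel₀ h43 (by linear_combination key)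
  have hm5 : ((m + 3 : ℕ) : ℚ) + 2 ≠ 0 := by positivity
  rw [div_mul_eq_mul_div, eq_div_iff hm5]
  push_cast
  linear_combination key2
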